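/- Suppose in each interval ℓ of length H, the regret satisfies R_ℓ ≤ c1·L_ℓ·H + c2·(1 + log(H)/Δ²) for all ℓ with Σ_{ℓ=1}^{⌊T/H⌋} L_ℓ ≤ L_T, and H is chosen as H = ⌈(T/L_T)^{1/2}⌉ with 1 ≤ L_T ≤ T. Then the total regret Σ_ℓ R_ℓ is at most C·(L_T·T)^{1/2}·(1 + log(T)/Δ²) for some absolute constant C depending only on c1 and c2. -/
import Mathlib


/-- Theorem 1 (deterministic bound form): with restart period `H = ⌈(T/L_T)^{1/2}⌉` and
interval regrets `R_ℓ ≤ c1·L_ℓ·H + c2·(1 + log H / Δ²)` whose change counts sum to at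
most `L_T`, the total regret is at most `C·(L_T·T)^{1/2}·(1 + log T / Δ²)` for some
constant `C` depending only on `c1` and `c2`. -/
theorem rcb_regret_bound (c1 c2 : ℝ) (hc1 : 0 < c1) (hc2 : 0 < c2) :
    ∃ C : ℝ, 0 < C ∧
      ∀ (T LT Δ : ℝ) (L R : ℕ → ℝ),
        1 ≤ LT → LT ≤ T → 0 < Δ → (∀ ℓ, 0 ≤ L ℓ) →
        (∀ ℓ, R ℓ ≤ c1 * L ℓ * (⌈Real.sqrt (T / LT)⌉₊ : ℝ) +
          c2 * (1 + Real.log (⌈Real.sqrt (T / LT)⌉₊ : ℝ) / Δ ^ 2)) →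
        (∑ ℓ ∈ Finset.Icc 1 ⌊T / (⌈Real.sqrt (T / LT)⌉₊ : ℝ)⌋₊, L ℓ) ≤ LT →
        ∑ ℓ ∈ Finset.Icc 1 ⌊T / (⌈Real.sqrt (T / LT)⌉₊ : ℝ)⌋₊, R ℓ ≤
          C * Real.sqrt (LT * T) * (1 + Real.log T / Δ ^ 2) := by
  refine ⟨2 * c1 + c2, by linarith, ?_⟩
  intro T LT Δ L R hLT1 hLTT hΔ hL hR hsum
  set s : ℝ := Real.sqrt (T / LT) with hs
  set H : ℕ := ⌈s⌉₊ with hH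
  set N : ℕ := ⌊T / (H : ℝ)⌋₊ with hN
  have hT1 : (1:ℝ) ≤ T := le_trans hLT1 hLTT
  have hLT0 : (0:ℝ) < LT := by linarith
  have hT0 : (0:ℝ) < T := by linarith
  have hlogT : 0 ≤ Real.log T := Real.log_nonneg hT1
  have hΔ2 : (0:ℝ) < Δ ^ 2 := by positivity
  have hfac : (1:ℝ) ≤ 1 + Real.log T / Δ ^ 2 := by
    have := div_nonneg hlogT hΔ2.le; linarith
  have hs1 : (1:ℝ) ≤ s := by
    rw [hs]
    have h1 : (1:ℝ) ≤ T / LT := (one_le_div hLT0).mpr hLTT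
    calc (1:ℝ) = Real.sqrt 1 := Real.sqrt_one.symm
      _ ≤ Real.sqrt (T / LT) := Real.sqrt_le_sqrt h1
  have hs0 : (0:ℝ) < s := by linarith
  have hsH : s ≤ (H : ℝ) := Nat.le_ceil s
  have hH1 : (1:ℝ) ≤ (H : ℝ) := le_trans hs1 hsH
  have hH2 : (H : ℝ) ≤ 2 * s := by
    have := Nat.ceil_lt_add_one (le_of_lt hs0)
    rw [← hH] at this; linarith
  have hsval : s * Real.sqrt LT = Real.sqrt T := by
    rw [hs, ← Real.sqrt_mul (by positivity), div_mul_cancel₀ _ (ne_of_gt hLT0)]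
  have hsqrtLTT : Real.sqrt (LT * T) = Real.sqrt LT * Real.sqrt T :=
    Real.sqrt_mul hLT0.le T
  have hA0 : (0:ℝ) ≤ Real.sqrt LT * Real.sqrt T := by positivity
  rcases Nat.eq_zero_or_pos N with h0 | hpos
  · rw [h0, show Finset.Icc 1 0 = (∅ : Finset ℕ) from by decide, Finset.sum_empty]
    have : (0:ℝ) ≤ (2 * c1 + c2) * Real.sqrt (LT * T) * (1 + Real.log T / Δ ^ 2) := by
      apply mul_nonneg (mul_nonneg (by linarith) (Real.sqrt_nonneg _)) (by linarith)
    linarith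
  · -- N ≥ 1 so T / H ≥ 1, hence H ≤ T
    have hNle : (N : ℝ) ≤ T / (H : ℝ) := Nat.floor_le (by positivity)
    have hTH1 : (1:ℝ) ≤ T / (H : ℝ) := by
      have : (1:ℝ) ≤ (N : ℝ) := Nat.one_le_cast.mpr hpos
      linarith
    have hHT : (H : ℝ) ≤ T := by
      have := (le_div_iff₀ (by linarith : (0:ℝ) < (H:ℝ))).mp hTH1
      linarith
    have hlogH : Real.log (H : ℝ) ≤ Real.log T :=
      Real.log_le_log (by linarith) hHT
    have hTs : T / s = Real.sqrt LT * Real.sqrt T := by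
      rw [div_eq_iff (ne_of_gt hs0)]
      calc T = Real.sqrt T * Real.sqrt T := (Real.mul_self_sqrt hT0.le).symm
        _ = (s * Real.sqrt LT) * Real.sqrt T := by rw [hsval]
        _ = Real.sqrt LT * Real.sqrt T * s := by ring
    have hNbound : (N : ℝ) ≤ Real.sqrt LT * Real.sqrt T := by
      have h1 : T / (H : ℝ) ≤ T / s :=
        div_le_div_of_nonneg_left hT0.le hs0 hsH
      linarith [hTs ▸ h1]
    have hLTs : LT * s = Real.sqrt LT * Real.sqrt T := by
      have hm : Real.sqrt LT * Real.sqrt LT = LT := Real.mul_self_sqrt hLT0.le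
      linear_combination Real.sqrt LT * hsval - s * hm
    have h1 : ∑ ℓ ∈ Finset.Icc 1 N, R ℓ ≤
        ∑ ℓ ∈ Finset.Icc 1 N, (c1 * L ℓ * (H : ℝ) + c2 * (1 + Real.log (H : ℝ) / Δ ^ 2)) :=
      Finset.sum_le_sum fun ℓ _ => hR ℓ
    have h2 : ∑ ℓ ∈ Finset.Icc 1 N, (c1 * L ℓ * (H : ℝ) + c2 * (1 + Real.log (H : ℝ) / Δ ^ 2))
        = c1 * (∑ ℓ ∈ Finset.Icc 1 N, L ℓ) * (H : ℝ)
          + (N : ℝ) * (c2 * (1 + Real.log (H : ℝ) / Δ ^ 2)) := by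
      rw [Finset.sum_add_distrib, Finset.sum_const, Nat.card_Icc, nsmul_eq_mul,
        ← Finset.sum_mul, ← Finset.mul_sum]
      simp
    have hfacH : (0:ℝ) ≤ 1 + Real.log (H : ℝ) / Δ ^ 2 := by
      have : (0:ℝ) ≤ Real.log (H : ℝ) := Real.log_nonneg hH1
      have := div_nonneg this hΔ2.le; linarith
    have hSL : (0:ℝ) ≤ ∑ ℓ ∈ Finset.Icc 1 N, L ℓ :=
      Finset.sum_nonneg fun ℓ _ => hL ℓ
    have h3 : c1 * (∑ ℓ ∈ Finset.Icc 1 N, L ℓ) * (H : ℝ) ≤ 2 * c1 * (Real.sqrt LT * Real.sqrt T) := by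
      have hHpos : (0:ℝ) < (H : ℝ) := by linarith
      have a1 : c1 * (∑ ℓ ∈ Finset.Icc 1 N, L ℓ) * (H : ℝ) ≤ c1 * LT * (H : ℝ) := by
        have := mul_le_mul_of_nonneg_left hsum hc1.le
        exact mul_le_mul_of_nonneg_right this hHpos.le
      have a2 : c1 * LT * (H : ℝ) ≤ c1 * LT * (2 * s) :=
        mul_le_mul_of_nonneg_left hH2 (by positivity)
      have a3 : c1 * LT * (2 * s) = 2 * c1 * (Real.sqrt LT * Real.sqrt T) := by
        rw [← hLTs]; ring
      linarith
    have h4 : (N : ℝ) * (c2 * (1 + Real.log (H : ℝ) / Δ ^ 2)) ≤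
        (Real.sqrt LT * Real.sqrt T) * (c2 * (1 + Real.log T / Δ ^ 2)) := by
      apply mul_le_mul hNbound ?_ (by positivity) hA0
      apply mul_le_mul_of_nonneg_left ?_ hc2.le
      have hdiv : Real.log (H : ℝ) / Δ ^ 2 ≤ Real.log T / Δ ^ 2 := by gcongr
      linarith
    have hfinal : 2 * c1 * (Real.sqrt LT * Real.sqrt T)
        + (Real.sqrt LT * Real.sqrt T) * (c2 * (1 + Real.log T / Δ ^ 2))
        ≤ (2 * c1 + c2) * Real.sqrt (LT * T) * (1 + Real.log T / Δ ^ 2) := by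
      rw [hsqrtLTT]
      nlinarith [mul_nonneg hA0 (by linarith : (0:ℝ) ≤ 1 + Real.log T / Δ ^ 2 - 1)]
    calc ∑ ℓ ∈ Finset.Icc 1 N, R ℓ
        ≤ c1 * (∑ ℓ ∈ Finset.Icc 1 N, L ℓ) * (H : ℝ)
          + (N : ℝ) * (c2 * (1 + Real.log (H : ℝ) / Δ ^ 2)) := by rw [← h2]; exact h1
      _ ≤ 2 * c1 * (Real.sqrt LT * Real.sqrt T)
          + (Real.sqrt LT * Real.sqrt T) * (c2 * (1 + Real.log T / Δ ^ 2)) := by linarith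
      _ ≤ (2 * c1 + c2) * Real.sqrt (LT * T) * (1 + Real.log T / Δ ^ 2) := hfinal
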